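/- arXiv:2503.12407 — 5 statements merged into one kernel-verified Lean document; each statement's English description precedes it below -/
import Mathlib

section
/- Let R' = k[x_1,...,x_m], R = k[x_1,...,x_{m+n}], S' = k[X_1,...,X_m], S = k[X_1,...,X_{m+n}] with contraction actions. For G ∈ S' and F = X_{m+1}^{a_{m+1}}···X_{m+n}^{a_{m+n}} G ∈ S with a_{m+1},...,a_{m+n} ∈ Z_{≥0}, one has Ann_R(F) = Ann_{R'}(G)R + (x_{m+1}^{a_{m+1}+1},...,x_{m+n}^{a_{m+n}+1}). -/
open scoped Classical
open MvPolynomial Finset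

/-- The contraction action of `k[x_1,...,x_N]` on `k[X_1,...,X_N]`. -/
noncomputable def contract {k : Type*} [CommRing k] {σ : Type*}
    (f F : MvPolynomial σ k) : MvPolynomial σ k :=
  ∑ a ∈ f.support, ∑ b ∈ F.support,
    if a ≤ b then MvPolynomial.monomial (b - a) (MvPolynomial.coeff a f * MvPolynomial.coeff b F)
    else 0

/-- `Ann_R(F) = {f ∈ R : f ∘ F = 0}` as a set. -/
noncomputable def annSet {k : Type*} [CommRing k] {σ : Type*}
    (F : MvPolynomial σ k) : Set (MvPolynomial σ k) :=
  {f | contract f F = 0}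

/-! Split the exponents of `k[x_1,…,x_{m+n}]` into the first `m` and the last `n` coordinates
and write `f = ∑_v x'^v g_v` with `g_v = component f v ∈ k[x_1,…,x_m]`. Comparing coefficients of
`X^d X'^w` gives `f ∘ (X'^a G) = ∑_{v ≤ a} X'^{a-v} (g_v ∘ G)`, so `f` annihilates `F` exactly when
`g_v ∘ G = 0` for every `v ≤ a`. The terms `x'^v g_v` with `v ≰ a` are multiples of some
`x_{m+j}^{a_j+1}` and the others lie in `Ann(G)R`; conversely both kinds of generators satisfy
the criterion. -/

section Contraction

variable {k σ : Type*} [CommRing k]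

theorem coeff_contract (f F : MvPolynomial σ k) (c : σ →₀ ℕ) :
    coeff c (contract f F) = ∑ d ∈ f.support, coeff d f * coeff (d + c) F := by
  unfold contract
  simp only [coeff_sum]
  refine Finset.sum_congr rfl fun d _ => ?_
  have hterm : ∀ b ∈ F.support,
      coeff c (if d ≤ b then monomial (b - d) (coeff d f * coeff b F) else 0) =
        if d + c = b then coeff d f * coeff b F else 0 := by
    intro b _
    split_ifs with hdb hb hb
    · simp [coeff_monomial, ← hb]
    · rw [coeff_monomial, if_neg fun h => hb (by rw [← h, add_tsub_cancel_of_le hdb])]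
    · exact absurd (hb ▸ le_self_add) hdb
    · simp
  rw [Finset.sum_congr rfl hterm, Finset.sum_ite_eq]
  split_ifs with h
  · rfl
  · rw [notMem_support_iff.mp h, mul_zero]

theorem coeff_contract_of_support_subset (f F : MvPolynomial σ k) (c : σ →₀ ℕ)
    {s : Finset (σ →₀ ℕ)} (hs : f.support ⊆ s) :
    coeff c (contract f F) = ∑ d ∈ s, coeff d f * coeff (d + c) F := by
  rw [coeff_contract]
  exact Finset.sum_subset hs fun d _ hd => by rw [notMem_support_iff.mp hd, zero_mul]

@[simp] theorem zero_contract (F : MvPolynomial σ k) : contract 0 F = 0 := by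
  simp [contract]

@[simp] theorem contract_zero (f : MvPolynomial σ k) : contract f 0 = 0 := by
  simp [contract]

theorem coeff_contract_monomial (d : σ →₀ ℕ) (r : k) (F : MvPolynomial σ k) (c : σ →₀ ℕ) :
    coeff c (contract (monomial d r) F) = r * coeff (d + c) F := by
  rw [coeff_contract_of_support_subset _ F c support_monomial_subset]
  simp

theorem add_contract (f g F : MvPolynomial σ k) :
    contract (f + g) F = contract f F + contract g F := by
  ext c
  rw [coeff_add, coeff_contract_of_support_subset _ F c support_add,
    coeff_contract_of_support_subset f F c Finset.subset_union_left,
    coeff_contract_of_support_subset g F c Finset.subset_union_right, ← Finset.sum_add_distrib]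
  simp only [coeff_add, add_mul]

theorem contract_add (f F F' : MvPolynomial σ k) :
    contract f (F + F') = contract f F + contract f F' := by
  ext c
  simp only [coeff_add, coeff_contract, mul_add, Finset.sum_add_distrib]

theorem mul_contract (f g F : MvPolynomial σ k) :
    contract (f * g) F = contract f (contract g F) := by
  induction f using MvPolynomial.induction_on' with
  | add f₁ f₂ h₁ h₂ => rw [add_mul, add_contract, add_contract, h₁, h₂]
  | monomial u r =>
    induction g using MvPolynomial.induction_on' with
    | add g₁ g₂ h₁ h₂ => rw [mul_add, add_contract, h₁, h₂, add_contract, contract_add]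
    | monomial u' r' =>
      ext c
      simp only [monomial_mul, coeff_contract_monomial, add_assoc, add_left_comm u' u]
      ring

noncomputable def annIdeal (F : MvPolynomial σ k) : Ideal (MvPolynomial σ k) where
  carrier := annSet F
  zero_mem' := zero_contract F
  add_mem' {f g} (hf : contract f F = 0) (hg : contract g F = 0) := by
    show contract (f + g) F = 0
    rw [add_contract, hf, hg, add_zero]
  smul_mem' c f (hf : contract f F = 0) := by
    show contract (c * f) F = 0
    rw [mul_contract, hf, contract_zero]

end Contraction

section Blocks

variable {m n : ℕ}

noncomputable def expAppend (u : Fin m →₀ ℕ) (v : Fin n →₀ ℕ) : Fin (m + n) →₀ ℕ :=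
  Finsupp.equivFunOnFinite.symm (Fin.append u v)

noncomputable def expLeft (b : Fin (m + n) →₀ ℕ) : Fin m →₀ ℕ :=
  Finsupp.equivFunOnFinite.symm fun i => b (Fin.castAdd n i)

noncomputable def expRight (b : Fin (m + n) →₀ ℕ) : Fin n →₀ ℕ :=
  Finsupp.equivFunOnFinite.symm fun j => b (Fin.natAdd m j)

@[simp] theorem expAppend_castAdd (u : Fin m →₀ ℕ) (v : Fin n →₀ ℕ) (i : Fin m) :
    expAppend u v (Fin.castAdd n i) = u i := by
  simp [expAppend]

@[simp] theorem expAppend_natAdd (u : Fin m →₀ ℕ) (v : Fin n →₀ ℕ) (j : Fin n) :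
    expAppend u v (Fin.natAdd m j) = v j := by
  simp [expAppend]

@[simp] theorem expLeft_apply (b : Fin (m + n) →₀ ℕ) (i : Fin m) :
    expLeft b i = b (Fin.castAdd n i) := by
  simp [expLeft]

@[simp] theorem expRight_apply (b : Fin (m + n) →₀ ℕ) (j : Fin n) :
    expRight b j = b (Fin.natAdd m j) := by
  simp [expRight]

theorem expAppend_ext {b b' : Fin (m + n) →₀ ℕ}
    (hl : ∀ i, b (Fin.castAdd n i) = b' (Fin.castAdd n i))
    (hr : ∀ j, b (Fin.natAdd m j) = b' (Fin.natAdd m j)) : b = b' := by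
  ext x
  induction x using Fin.addCases with
  | left i => exact hl i
  | right j => exact hr j

@[simp] theorem expAppend_zero_zero : expAppend (0 : Fin m →₀ ℕ) (0 : Fin n →₀ ℕ) = 0 :=
  expAppend_ext (by simp) (by simp)

@[simp] theorem expAppend_expLeft_expRight (b : Fin (m + n) →₀ ℕ) :
    expAppend (expLeft b) (expRight b) = b :=
  expAppend_ext (by simp) (by simp)

theorem exists_eq_expAppend (b : Fin (m + n) →₀ ℕ) : ∃ u v, b = expAppend u v :=
  ⟨_, _, (expAppend_expLeft_expRight b).symm⟩

@[simp] theorem expLeft_expAppend (u : Fin m →₀ ℕ) (v : Fin n →₀ ℕ) :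
    expLeft (expAppend u v) = u := by
  ext i; simp

@[simp] theorem expRight_expAppend (u : Fin m →₀ ℕ) (v : Fin n →₀ ℕ) :
    expRight (expAppend u v) = v := by
  ext j; simp

theorem expAppend_injective₂ : Function.Injective2 (expAppend (m := m) (n := n)) :=
  fun u u' v v' h => ⟨by simpa using congrArg expLeft h, by simpa using congrArg expRight h⟩

theorem expAppend_add_expAppend (u u' : Fin m →₀ ℕ) (v v' : Fin n →₀ ℕ) :
    expAppend u v + expAppend u' v' = expAppend (u + u') (v + v') :=
  expAppend_ext (by simp) (by simp)

theorem expAppend_le_expAppend {u u' : Fin m →₀ ℕ} {v v' : Fin n →₀ ℕ} :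
    expAppend u v ≤ expAppend u' v' ↔ u ≤ u' ∧ v ≤ v' := by
  simp only [Finsupp.le_def, Fin.forall_fin_add, expAppend_castAdd, expAppend_natAdd]

theorem expAppend_tsub_expAppend (u u' : Fin m →₀ ℕ) (v v' : Fin n →₀ ℕ) :
    expAppend u v - expAppend u' v' = expAppend (u - u') (v - v') :=
  expAppend_ext (by simp) (by simp)

theorem mapDomain_castAdd (u : Fin m →₀ ℕ) :
    Finsupp.mapDomain (Fin.castAdd n) u = expAppend u 0 := by
  refine expAppend_ext (fun i => ?_) fun j => ?_
  · simp [Finsupp.mapDomain_apply (Fin.castAdd_injective m n)]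
  · rw [expAppend_natAdd, Finsupp.coe_zero, Pi.zero_apply]
    refine Finsupp.mapDomain_of_notMem_range _ _ ?_
    rintro ⟨i, hi⟩
    simp only [Fin.ext_iff, Fin.val_castAdd, Fin.val_natAdd] at hi
    omega

theorem single_natAdd (j : Fin n) (t : ℕ) :
    Finsupp.single (Fin.natAdd m j) t = expAppend 0 (Finsupp.single j t) := by
  refine expAppend_ext (fun i => ?_) fun j' => ?_
  · simp only [Finsupp.single_apply, Fin.ext_iff, Fin.val_castAdd, Fin.val_natAdd,
      expAppend_castAdd, Finsupp.coe_zero, Pi.zero_apply]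
    split_ifs <;> omega
  · simp [Finsupp.single_apply, Fin.ext_iff]

end Blocks

section Components

variable {k : Type*} [CommRing k] {m n : ℕ}

theorem coeff_expAppend_rename_castAdd (g : MvPolynomial (Fin m) k) (u : Fin m →₀ ℕ)
    (v : Fin n →₀ ℕ) :
    coeff (expAppend u v) (rename (Fin.castAdd n) g) = if v = 0 then coeff u g else 0 := by
  split_ifs with hv
  · rw [hv, ← mapDomain_castAdd]
    exact coeff_rename_mapDomain _ (Fin.castAdd_injective m n) g u
  · refine coeff_rename_eq_zero _ _ _ fun u' hu' => absurd ?_ hv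
    simpa [mapDomain_castAdd] using (congrArg expRight hu').symm

theorem coeff_expAppend_monomial_mul_rename (w : Fin n →₀ ℕ) (g : MvPolynomial (Fin m) k)
    (u : Fin m →₀ ℕ) (v : Fin n →₀ ℕ) :
    coeff (expAppend u v) (monomial (expAppend 0 w) 1 * rename (Fin.castAdd n) g) =
      if v = w then coeff u g else 0 := by
  rw [mul_comm, coeff_mul_monomial']
  by_cases hwv : w ≤ v
  · rw [if_pos (expAppend_le_expAppend.2 ⟨zero_le, hwv⟩), expAppend_tsub_expAppend, tsub_zero,
      coeff_expAppend_rename_castAdd, mul_one]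
    simp only [tsub_eq_zero_iff_le, hwv.ge_iff_eq']
  · rw [if_neg fun h => hwv (expAppend_le_expAppend.1 h).2, if_neg fun h => hwv h.ge]

theorem prod_X_natAdd_pow (a : Fin n → ℕ) :
    ∏ j, (X (Fin.natAdd m j) : MvPolynomial (Fin (m + n)) k) ^ a j =
      monomial (expAppend 0 (Finsupp.equivFunOnFinite.symm a)) 1 := by
  simp only [X_pow_eq_monomial, ← monomial_sum_one, single_natAdd]
  congr 2
  refine expAppend_ext (fun i => ?_) fun j => ?_ <;>
    simp [Finsupp.finsetSum_apply, Finsupp.single_apply]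

noncomputable def component (f : MvPolynomial (Fin (m + n)) k) (v : Fin n →₀ ℕ) :
    MvPolynomial (Fin m) k :=
  ∑ c ∈ f.support with expRight c = v, monomial (expLeft c) (coeff c f)

@[simp] theorem coeff_component (f : MvPolynomial (Fin (m + n)) k) (v : Fin n →₀ ℕ)
    (u : Fin m →₀ ℕ) : coeff u (component f v) = coeff (expAppend u v) f := by
  simp only [component, coeff_sum, coeff_monomial]
  rw [Finset.sum_eq_single (expAppend u v)]
  · simp
  · intro c hc hne
    refine if_neg fun h => hne ?_
    rw [← h, ← (Finset.mem_filter.1 hc).2, expAppend_expLeft_expRight]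
  · intro h
    rw [if_pos (expLeft_expAppend u v), ← notMem_support_iff]
    simpa using h

theorem component_add (f g : MvPolynomial (Fin (m + n)) k) (v : Fin n →₀ ℕ) :
    component (f + g) v = component f v + component g v := by
  ext u; simp

theorem component_monomial (u : Fin m →₀ ℕ) (w v : Fin n →₀ ℕ) (r : k) :
    component (monomial (expAppend u w) r) v = if w = v then monomial u r else 0 := by
  ext u'
  simp only [coeff_component, coeff_monomial, expAppend_injective₂.eq_iff]
  split_ifs <;> simp_all

theorem component_monomial_mul_rename (w : Fin n →₀ ℕ) (g : MvPolynomial (Fin m) k)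
    (v : Fin n →₀ ℕ) :
    component (monomial (expAppend 0 w) 1 * rename (Fin.castAdd n) g) v =
      if v = w then g else 0 := by
  ext u
  simp only [coeff_component, coeff_expAppend_monomial_mul_rename]
  split_ifs <;> simp

theorem sum_monomial_mul_rename_component (f : MvPolynomial (Fin (m + n)) k) :
    ∑ v ∈ f.support.image expRight,
      monomial (expAppend 0 v) 1 * rename (Fin.castAdd n) (component f v) = f := by
  ext b
  obtain ⟨u, v, rfl⟩ := exists_eq_expAppend b
  simp only [coeff_sum, coeff_expAppend_monomial_mul_rename, coeff_component, Finset.sum_ite_eq]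
  split_ifs with hv
  · rfl
  · refine (notMem_support_iff.1 fun hf => hv ?_).symm
    simpa using Finset.mem_image_of_mem expRight hf

end Components

section Annihilator

variable {k : Type*} [CommRing k] {m n : ℕ}

theorem coeff_expAppend_contract_monomial_mul_rename (f : MvPolynomial (Fin (m + n)) k)
    (a : Fin n →₀ ℕ) (G : MvPolynomial (Fin m) k) (d : Fin m →₀ ℕ) (w : Fin n →₀ ℕ) :
    coeff (expAppend d w) (contract f (monomial (expAppend 0 a) 1 * rename (Fin.castAdd n) G)) =
      if w ≤ a then coeff d (contract (component f (a - w)) G) else 0 := by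
  induction f using MvPolynomial.induction_on' with
  | add f₁ f₂ h₁ h₂ =>
    simp only [add_contract, coeff_add, h₁, h₂, component_add]
    split_ifs <;> simp
  | monomial c r =>
    obtain ⟨u, v, rfl⟩ := exists_eq_expAppend c
    rw [coeff_contract_monomial, expAppend_add_expAppend, coeff_expAppend_monomial_mul_rename,
      component_monomial]
    by_cases hw : w ≤ a
    · simp only [if_pos hw, eq_tsub_iff_add_eq_of_le hw]
      split_ifs <;> simp [coeff_contract_monomial]
    · have : v + w ≠ a := fun h => hw (h ▸ le_add_self)
      simp [hw, this]

theorem contract_monomial_mul_rename_eq_zero_iff (f : MvPolynomial (Fin (m + n)) k)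
    (a : Fin n →₀ ℕ) (G : MvPolynomial (Fin m) k) :
    contract f (monomial (expAppend 0 a) 1 * rename (Fin.castAdd n) G) = 0 ↔
      ∀ v ≤ a, contract (component f v) G = 0 := by
  constructor
  · intro h v hv
    ext d
    simpa [h, tsub_tsub_cancel_of_le hv, eq_comm] using
      coeff_expAppend_contract_monomial_mul_rename f a G d (a - v)
  · intro h
    ext b
    obtain ⟨d, w, rfl⟩ := exists_eq_expAppend b
    rw [coeff_expAppend_contract_monomial_mul_rename]
    split_ifs <;> simp [h]

theorem monomial_mul_rename_mem_annIdeal_iff (w a : Fin n →₀ ℕ) (g G : MvPolynomial (Fin m) k) :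
    monomial (expAppend 0 w) 1 * rename (Fin.castAdd n) g ∈
        annIdeal (monomial (expAppend 0 a) 1 * rename (Fin.castAdd n) G) ↔
      (w ≤ a → g ∈ annIdeal G) := by
  change contract _ _ = 0 ↔ (w ≤ a → contract g G = 0)
  simp only [contract_monomial_mul_rename_eq_zero_iff, component_monomial_mul_rename]
  exact ⟨fun h hw => by simpa using h w hw, fun h v hv => by split_ifs with hvw <;> simp_all⟩

theorem monomial_mem_span_X_natAdd_pow {a : Fin n → ℕ} {c : Fin (m + n) →₀ ℕ} (j : Fin n)
    (hj : a j < c (Fin.natAdd m j)) (r : k) :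
    monomial c r ∈
      Ideal.span (Set.range fun j => (X (Fin.natAdd m j) : MvPolynomial _ k) ^ (a j + 1)) := by
  have hle : Finsupp.single (Fin.natAdd m j) (a j + 1) ≤ c := Finsupp.single_le_iff.2 hj
  have : monomial c r = monomial (c - Finsupp.single (Fin.natAdd m j) (a j + 1)) r *
      (X (Fin.natAdd m j)) ^ (a j + 1) := by
    rw [X_pow_eq_monomial, monomial_mul, mul_one, tsub_add_cancel_of_le hle]
  rw [this]
  exact Ideal.mul_mem_left _ _ (Ideal.subset_span ⟨j, rfl⟩)

end Annihilator

/-- For `G ∈ S' = k[X_1,...,X_m]` and `F = X_{m+1}^{a_{m+1}} ⋯ X_{m+n}^{a_{m+n}} G ∈ S`,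
one has `Ann_R(F) = Ann_{R'}(G)R + (x_{m+1}^{a_{m+1}+1},...,x_{m+n}^{a_{m+n}+1})`. -/
theorem stmt5 (k : Type*) [Field k] (m n : ℕ)
    (G : MvPolynomial (Fin m) k) (a : Fin n → ℕ) :
    annSet ((∏ j, (MvPolynomial.X (Fin.natAdd m j) : MvPolynomial (Fin (m + n)) k) ^ a j) *
        MvPolynomial.rename (Fin.castAdd n) G) =
      ((Ideal.span ((⇑(MvPolynomial.rename (Fin.castAdd n) : MvPolynomial (Fin m) k →ₐ[k] MvPolynomial (Fin (m + n)) k)) '' annSet G ∪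
          Set.range fun j : Fin n =>
            (MvPolynomial.X (Fin.natAdd m j) : MvPolynomial (Fin (m + n)) k) ^ (a j + 1))) :
        Set (MvPolynomial (Fin (m + n)) k)) := by
  rw [prod_X_natAdd_pow]
  set a' : Fin n →₀ ℕ := Finsupp.equivFunOnFinite.symm a
  change SetLike.coe (annIdeal (_ : MvPolynomial (Fin (m + n)) k)) = _
  refine SetLike.coe_set_eq.2 (le_antisymm (fun f hf => ?_) (Ideal.span_le.2 ?_))
  · rw [← sum_monomial_mul_rename_component f]
    refine Ideal.sum_mem _ fun v _ => ?_
    by_cases hv : v ≤ a'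
    · have hg : component f v ∈ annSet G :=
        (contract_monomial_mul_rename_eq_zero_iff f a' G).1 hf v hv
      exact Ideal.mul_mem_left _ _ (Ideal.subset_span (Or.inl ⟨_, hg, rfl⟩))
    · obtain ⟨j, hj⟩ : ∃ j, a j < v j := by simpa [a', Finsupp.le_def] using hv
      refine Ideal.mul_mem_right _ _ (Ideal.span_mono Set.subset_union_right ?_)
      exact monomial_mem_span_X_natAdd_pow j (by simpa using hj) 1
  · rintro _ (⟨g, hg, rfl⟩ | ⟨j, rfl⟩)
    · have := (monomial_mul_rename_mem_annIdeal_iff 0 a' g G).2 fun _ => hg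
      simpa using this
    · have hj : ¬ Finsupp.single j (a j + 1) ≤ a' := fun h => by simpa [a'] using h j
      have h := (monomial_mul_rename_mem_annIdeal_iff (Finsupp.single j (a j + 1)) a' 1 G).2
        (absurd · hj)
      rwa [map_one (rename (R := k) (Fin.castAdd n)), mul_one, ← single_natAdd,
        ← X_pow_eq_monomial] at h
end

section
/- With p and I as in the previous statement (m ≥ 1, b_{m+1} ≥ 1, a_{m+1}+1 ≥ v b_{m+1}), the ideal I = (x_1^{a_1+b_1+1},...,x_m^{a_m+b_m+1}, p) contains x_j^{a_j+1} x_{m+1}^{a_{m+1}+1} for every j = 1,...,m, and also contains x_{m+1}^{a_{m+1}+b_{m+1}+1}. -/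
open scoped Classical
open MvPolynomial Finset

/-- Prop 2.6(1): with `v = min{i ≥ 1 : a_j + 1 ≤ i b_j for some j ≤ m with b_j ≠ 0}` and
`a_{m+1} + 1 ≥ v b_{m+1}`, the ideal `I = (x_1^{a_1+b_1+1},...,x_m^{a_m+b_m+1}, p)` with
`p = Σ_{i=0}^{v} c^i (x_1^{b_1}⋯x_m^{b_m})^i x_{m+1}^{a_{m+1}+1-i b_{m+1}}` contains
`x_j^{a_j+1} x_{m+1}^{a_{m+1}+1}` for each `j = 1,...,m` and `x_{m+1}^{a_{m+1}+b_{m+1}+1}`. -/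
theorem stmt10 (k : Type*) [Field k] (m : ℕ) (hm : 1 ≤ m)
    (a b : Fin (m + 1) → ℕ) (c : k) (hc : c ≠ 0)
    (hbm1 : 1 ≤ b (Fin.last m))
    (v : ℕ) (hv1 : 1 ≤ v)
    (hvex : ∃ j : Fin (m + 1), (j : ℕ) < m ∧ b j ≠ 0 ∧ a j + 1 ≤ v * b j)
    (hvmin : ∀ i, 1 ≤ i → i < v →
      ¬ ∃ j : Fin (m + 1), (j : ℕ) < m ∧ b j ≠ 0 ∧ a j + 1 ≤ i * b j)
    (hge : v * b (Fin.last m) ≤ a (Fin.last m) + 1) :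
    (∀ j : Fin (m + 1), (j : ℕ) < m →
      (MvPolynomial.X j : MvPolynomial (Fin (m + 1)) k) ^ (a j + 1) *
          MvPolynomial.X (Fin.last m) ^ (a (Fin.last m) + 1) ∈
        Ideal.span (insert
          (∑ i ∈ Finset.range (v + 1), MvPolynomial.C (c ^ i) *
            (∏ j' ∈ (Finset.univ : Finset (Fin (m + 1))).filter
                fun j' : Fin (m + 1) => (j' : ℕ) < m,
              (MvPolynomial.X j' : MvPolynomial (Fin (m + 1)) k) ^ b j') ^ i *
            MvPolynomial.X (Fin.last m) ^ (a (Fin.last m) + 1 - i * b (Fin.last m)))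
          ((fun j' => (MvPolynomial.X j' : MvPolynomial (Fin (m + 1)) k) ^ (a j' + b j' + 1)) ''
            {j' : Fin (m + 1) | (j' : ℕ) < m}))) ∧
    (MvPolynomial.X (Fin.last m) : MvPolynomial (Fin (m + 1)) k) ^
        (a (Fin.last m) + b (Fin.last m) + 1) ∈
      Ideal.span (insert
        (∑ i ∈ Finset.range (v + 1), MvPolynomial.C (c ^ i) *
          (∏ j' ∈ (Finset.univ : Finset (Fin (m + 1))).filter
              fun j' : Fin (m + 1) => (j' : ℕ) < m,
            (MvPolynomial.X j' : MvPolynomial (Fin (m + 1)) k) ^ b j') ^ i *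
          MvPolynomial.X (Fin.last m) ^ (a (Fin.last m) + 1 - i * b (Fin.last m)))
        ((fun j' => (MvPolynomial.X j' : MvPolynomial (Fin (m + 1)) k) ^ (a j' + b j' + 1)) ''
          {j' : Fin (m + 1) | (j' : ℕ) < m})) := by
  set L := Fin.last m with hL
  set Q : MvPolynomial (Fin (m + 1)) k :=
    ∏ j' ∈ (Finset.univ : Finset (Fin (m + 1))).filter
        fun j' : Fin (m + 1) => (j' : ℕ) < m,
      (MvPolynomial.X j' : MvPolynomial (Fin (m + 1)) k) ^ b j' with hQ
  set P : MvPolynomial (Fin (m + 1)) k :=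
    ∑ i ∈ Finset.range (v + 1), MvPolynomial.C (c ^ i) * Q ^ i *
      MvPolynomial.X L ^ (a L + 1 - i * b L) with hP
  set S : Set (MvPolynomial (Fin (m + 1)) k) :=
    (fun j' => (MvPolynomial.X j' : MvPolynomial (Fin (m + 1)) k) ^ (a j' + b j' + 1)) ''
      {j' : Fin (m + 1) | (j' : ℕ) < m} with hS
  set I := Ideal.span (insert P S) with hI
  have hPmem : P ∈ I := Ideal.subset_span (Set.mem_insert _ _)
  have hgen : ∀ j : Fin (m + 1), (j : ℕ) < m →
      (MvPolynomial.X j : MvPolynomial (Fin (m + 1)) k) ^ (a j + b j + 1) ∈ I :=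
    fun j hj => Ideal.subset_span (Set.mem_insert_of_mem _ ⟨j, hj, rfl⟩)
  have hXbQ : ∀ j : Fin (m + 1), (j : ℕ) < m →
      (MvPolynomial.X j : MvPolynomial (Fin (m + 1)) k) ^ b j ∣ Q :=
    fun j hj => Finset.dvd_prod_of_mem _ (by simp [hj])
  have hmem_of_dvd : ∀ x y : MvPolynomial (Fin (m + 1)) k, x ∈ I → x ∣ y → y ∈ I := by
    rintro x y hx ⟨r, rfl⟩
    exact Ideal.mul_mem_right _ _ hx
  constructor
  · -- part 1
    intro j hj
    by_cases hbj : b j = 0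
    · refine hmem_of_dvd _ _ (hgen j hj) ?_
      rw [hbj]
      exact ⟨MvPolynomial.X L ^ (a L + 1), by ring⟩
    · have key : (MvPolynomial.X j : MvPolynomial (Fin (m + 1)) k) ^ (a j + 1) *
          MvPolynomial.X L ^ (a L + 1) =
          MvPolynomial.X j ^ (a j + 1) * P -
          ∑ i ∈ Finset.Ico 1 (v + 1), MvPolynomial.X j ^ (a j + 1) *
            (MvPolynomial.C (c ^ i) * Q ^ i * MvPolynomial.X L ^ (a L + 1 - i * b L)) := by
        rw [hP, Finset.mul_sum, Finset.range_eq_Ico,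
          Finset.sum_eq_sum_Ico_succ_bot (by omega : 0 < v + 1)]
        simp only [pow_zero, map_one, one_mul, Nat.zero_mul, Nat.sub_zero]
        ring
      rw [key]
      refine Ideal.sub_mem _ (Ideal.mul_mem_left _ _ hPmem) (Ideal.sum_mem _ ?_)
      intro i hi
      obtain ⟨hi1, _⟩ := Finset.mem_Ico.mp hi
      refine hmem_of_dvd _ _ (hgen j hj) ?_
      obtain ⟨r, hr⟩ : (MvPolynomial.X j : MvPolynomial (Fin (m + 1)) k) ^ b j ∣ Q ^ i :=
        (hXbQ j hj).trans (dvd_pow_self Q (by omega))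
      exact ⟨r * (MvPolynomial.C (c ^ i) * MvPolynomial.X L ^ (a L + 1 - i * b L)),
        by rw [pow_add, pow_add]; rw [hr]; ring⟩
  · -- part 2
    set g : ℕ → MvPolynomial (Fin (m + 1)) k := fun i =>
      MvPolynomial.C (c ^ i) * Q ^ i * MvPolynomial.X L ^ (a L + 1 + b L - i * b L) with hg
    have hle : ∀ i ∈ Finset.range (v + 1), i * b L ≤ a L + 1 := by
      intro i hi
      exact le_trans (Nat.mul_le_mul_right _ (Nat.lt_succ_iff.mp (Finset.mem_range.mp hi))) hge
    have e1 : MvPolynomial.X L ^ b L * P = ∑ i ∈ Finset.range (v + 1), g i := by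
      rw [hP, Finset.mul_sum]
      refine Finset.sum_congr rfl fun i hi => ?_
      simp only [hg]
      have h2 : a L + 1 - i * b L + b L = a L + 1 + b L - i * b L := by
        have := hle i hi; omega
      rw [← h2, pow_add]
      ring
    have e2 : MvPolynomial.C c * Q * P = ∑ i ∈ Finset.range (v + 1), g (i + 1) := by
      rw [hP, Finset.mul_sum]
      refine Finset.sum_congr rfl fun i hi => ?_
      simp only [hg]
      have h3 : (i + 1) * b L = i * b L + b L := by ring
      have h2 : a L + 1 + b L - (i + 1) * b L = a L + 1 - i * b L := by
        have := hle i hi; omega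
      rw [h2, pow_succ c i, map_mul, pow_succ Q i]
      ring
    have e3 : ∑ i ∈ Finset.range (v + 1), (g i - g (i + 1)) = g 0 - g (v + 1) :=
      Finset.sum_range_sub' g (v + 1)
    have key : (MvPolynomial.X L : MvPolynomial (Fin (m + 1)) k) ^ (a L + b L + 1) =
        MvPolynomial.X L ^ b L * P - MvPolynomial.C c * Q * P + g (v + 1) := by
      rw [e1, e2, ← Finset.sum_sub_distrib, e3]
      have h0 : g 0 = MvPolynomial.X L ^ (a L + b L + 1) := by
        rw [hg]
        simp only [pow_zero, map_one, one_mul, Nat.zero_mul, Nat.sub_zero]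
        congr 1
        omega
      rw [h0]
      ring
    rw [key]
    refine Ideal.add_mem _ (Ideal.sub_mem _ (Ideal.mul_mem_left _ _ hPmem)
      (Ideal.mul_mem_left _ _ hPmem)) ?_
    obtain ⟨j0, hj0, hbj0, hvb⟩ := hvex
    refine hmem_of_dvd _ _ (hgen j0 hj0) ?_
    have hd1 : (MvPolynomial.X j0 : MvPolynomial (Fin (m + 1)) k) ^ (a j0 + b j0 + 1) ∣
        MvPolynomial.X j0 ^ ((v + 1) * b j0) :=
      pow_dvd_pow _ (by nlinarith)
    have hd2 : (MvPolynomial.X j0 : MvPolynomial (Fin (m + 1)) k) ^ ((v + 1) * b j0) ∣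
        Q ^ (v + 1) := by
      rw [mul_comm, pow_mul]
      exact pow_dvd_pow_of_dvd (hXbQ j0 hj0) _
    refine (hd1.trans hd2).trans ?_
    rw [hg]
    exact ⟨MvPolynomial.C (c ^ (v + 1)) * MvPolynomial.X L ^ (a L + 1 + b L - (v + 1) * b L),
      by ring⟩
end

section
/- Let R = k[x_1,x_2], F = X_1^{a_1}X_2^{a_2}(c_1 X_1^{b_1} − c_2 X_2^{b_2}) with b_1, b_2 ≥ 1, c_1, c_2 ≠ 0, and v := v_1 = v_2. With p, q as above, the following syzygy-type identities hold: c_2^v x_1^{(v+1)b_1} = x_1^{b_1} p − c_1 x_1^{v b_1 − a_1 − 1} x_2^{v b_2 − a_2 − 1} q and c_1^v x_2^{(v+1)b_2} = x_2^{b_2} p − c_2 x_1^{v b_1 − a_1 − 1} x_2^{v b_2 − a_2 − 1} q; in particular (p, q) is an (x_1, x_2)-primary ideal. -/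
open scoped Classical
open MvPolynomial Finset

/-- `p = Σ_{i=0}^{v} c_1^{v-i} c_2^i x_1^{i b_1} x_2^{(v-i) b_2}`. -/
noncomputable def pPoly (k : Type*) [Field k] (b1 b2 v : ℕ) (c1 c2 : k) :
    MvPolynomial (Fin 2) k :=
  ∑ i ∈ Finset.range (v + 1),
    MvPolynomial.C (c1 ^ (v - i) * c2 ^ i) * MvPolynomial.X 0 ^ (i * b1) *
      MvPolynomial.X 1 ^ ((v - i) * b2)

/-- `q = Σ_{i=0}^{v-1} c_1^{v-1-i} c_2^i x_1^{a_1+1-(v-1-i)b_1} x_2^{a_2+1-i b_2}`. -/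
noncomputable def qPoly (k : Type*) [Field k] (a1 a2 b1 b2 v : ℕ) (c1 c2 : k) :
    MvPolynomial (Fin 2) k :=
  ∑ i ∈ Finset.range v,
    MvPolynomial.C (c1 ^ (v - 1 - i) * c2 ^ i) * MvPolynomial.X 0 ^ (a1 + 1 - (v - 1 - i) * b1) *
      MvPolynomial.X 1 ^ (a2 + 1 - i * b2)

/-- The syzygy-type identities
`c_2^v x_1^{(v+1)b_1} = x_1^{b_1} p - c_1 x_1^{v b_1-a_1-1} x_2^{v b_2-a_2-1} q` and
`c_1^v x_2^{(v+1)b_2} = x_2^{b_2} p - c_2 x_1^{v b_1-a_1-1} x_2^{v b_2-a_2-1} q`;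
in particular `(p, q)` is an `(x_1, x_2)`-primary ideal. -/
theorem stmt13 (k : Type*) [Field k] (a1 a2 b1 b2 : ℕ) (hb1 : 1 ≤ b1) (hb2 : 1 ≤ b2)
    (c1 c2 : k) (hc1 : c1 ≠ 0) (hc2 : c2 ≠ 0)
    (v : ℕ)
    (hv1 : 1 ≤ v) (hv12 : a1 + 1 ≤ v * b1) (hv13 : ∀ i, 1 ≤ i → a1 + 1 ≤ i * b1 → v ≤ i)
    (hv22 : a2 + 1 ≤ v * b2) (hv23 : ∀ i, 1 ≤ i → a2 + 1 ≤ i * b2 → v ≤ i) :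
    (MvPolynomial.C (c2 ^ v) * (MvPolynomial.X 0 : MvPolynomial (Fin 2) k) ^ ((v + 1) * b1) =
        MvPolynomial.X 0 ^ b1 * pPoly k b1 b2 v c1 c2 -
          MvPolynomial.C c1 * MvPolynomial.X 0 ^ (v * b1 - a1 - 1) *
            MvPolynomial.X 1 ^ (v * b2 - a2 - 1) * qPoly k a1 a2 b1 b2 v c1 c2) ∧
    (MvPolynomial.C (c1 ^ v) * (MvPolynomial.X 1 : MvPolynomial (Fin 2) k) ^ ((v + 1) * b2) =
        MvPolynomial.X 1 ^ b2 * pPoly k b1 b2 v c1 c2 -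
          MvPolynomial.C c2 * MvPolynomial.X 0 ^ (v * b1 - a1 - 1) *
            MvPolynomial.X 1 ^ (v * b2 - a2 - 1) * qPoly k a1 a2 b1 b2 v c1 c2) ∧
    (Ideal.span {pPoly k b1 b2 v c1 c2, qPoly k a1 a2 b1 b2 v c1 c2}).IsPrimary ∧
    (Ideal.span {pPoly k b1 b2 v c1 c2, qPoly k a1 a2 b1 b2 v c1 c2}).radical =
      Ideal.span {(MvPolynomial.X 0 : MvPolynomial (Fin 2) k), MvPolynomial.X 1} := by
  -- basic exponent facts
  have h1 : (v - 1) * b1 ≤ a1 := by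
    rcases Nat.eq_zero_or_pos (v - 1) with h | h
    · simp [h]
    · by_contra hc
      push_neg at hc
      exact absurd (hv13 (v - 1) h hc) (by omega)
  have h2 : (v - 1) * b2 ≤ a2 := by
    rcases Nat.eq_zero_or_pos (v - 1) with h | h
    · simp [h]
    · by_contra hc
      push_neg at hc
      exact absurd (hv23 (v - 1) h hc) (by omega)
  -- exponent identities
  have e1 : ∀ i, i < v → (v * b1 - a1 - 1) + (a1 + 1 - (v - 1 - i) * b1) = (i + 1) * b1 := by
    intro i hi
    have hW : (v - 1 - i) * b1 ≤ a1 := le_trans (Nat.mul_le_mul_right _ (by omega)) h1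
    have hsub : v * b1 - (v - 1 - i) * b1 = (i + 1) * b1 := by
      rw [← Nat.sub_mul]
      congr 1
      omega
    omega
  have e2 : ∀ i, i < v → (v * b2 - a2 - 1) + (a2 + 1 - i * b2) = (v - i) * b2 := by
    intro i hi
    have hW : i * b2 ≤ a2 := le_trans (Nat.mul_le_mul_right _ (by omega)) h2
    have hsub : v * b2 - i * b2 = (v - i) * b2 := (Nat.sub_mul v i b2).symm
    omega
  -- the common sums
  have sumq1 : MvPolynomial.C c1 * MvPolynomial.X 0 ^ (v * b1 - a1 - 1) *
        MvPolynomial.X 1 ^ (v * b2 - a2 - 1) * qPoly k a1 a2 b1 b2 v c1 c2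
      = ∑ i ∈ Finset.range v, MvPolynomial.C (c1 ^ (v - i) * c2 ^ i) *
          (MvPolynomial.X 0 : MvPolynomial (Fin 2) k) ^ ((i + 1) * b1) *
          MvPolynomial.X 1 ^ ((v - i) * b2) := by
    rw [qPoly, Finset.mul_sum]
    refine Finset.sum_congr rfl fun i hi => ?_
    have hi' : i < v := Finset.mem_range.mp hi
    rw [← e1 i hi', ← e2 i hi', pow_add, pow_add]
    have hcpow : c1 ^ (v - i) = c1 * c1 ^ (v - 1 - i) := by
      rw [← pow_succ']
      congr 1
      omega
    rw [hcpow]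
    simp only [map_mul, map_one]
    ring
  have sumq2 : MvPolynomial.C c2 * MvPolynomial.X 0 ^ (v * b1 - a1 - 1) *
        MvPolynomial.X 1 ^ (v * b2 - a2 - 1) * qPoly k a1 a2 b1 b2 v c1 c2
      = ∑ i ∈ Finset.range v, MvPolynomial.C (c1 ^ (v - 1 - i) * c2 ^ (i + 1)) *
          (MvPolynomial.X 0 : MvPolynomial (Fin 2) k) ^ ((i + 1) * b1) *
          MvPolynomial.X 1 ^ ((v - i) * b2) := by
    rw [qPoly, Finset.mul_sum]
    refine Finset.sum_congr rfl fun i hi => ?_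
    have hi' : i < v := Finset.mem_range.mp hi
    rw [← e1 i hi', ← e2 i hi']
    simp only [pow_succ, map_mul]
    ring
  have sump1 : (MvPolynomial.X 0 : MvPolynomial (Fin 2) k) ^ b1 * pPoly k b1 b2 v c1 c2
      = (∑ i ∈ Finset.range v, MvPolynomial.C (c1 ^ (v - i) * c2 ^ i) *
          (MvPolynomial.X 0 : MvPolynomial (Fin 2) k) ^ ((i + 1) * b1) *
          MvPolynomial.X 1 ^ ((v - i) * b2))
        + MvPolynomial.C (c2 ^ v) * MvPolynomial.X 0 ^ ((v + 1) * b1) := by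
    rw [pPoly, Finset.mul_sum, Finset.sum_range_succ]
    congr 1
    · refine Finset.sum_congr rfl fun i hi => ?_
      ring
    · simp only [Nat.sub_self, pow_zero, one_mul, zero_mul]
      ring
  have sump2 : (MvPolynomial.X 1 : MvPolynomial (Fin 2) k) ^ b2 * pPoly k b1 b2 v c1 c2
      = (∑ i ∈ Finset.range v, MvPolynomial.C (c1 ^ (v - 1 - i) * c2 ^ (i + 1)) *
          (MvPolynomial.X 0 : MvPolynomial (Fin 2) k) ^ ((i + 1) * b1) *
          MvPolynomial.X 1 ^ ((v - i) * b2))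
        + MvPolynomial.C (c1 ^ v) * MvPolynomial.X 1 ^ ((v + 1) * b2) := by
    rw [pPoly, Finset.mul_sum, Finset.sum_range_succ']
    congr 1
    · refine Finset.sum_congr rfl fun i hi => ?_
      have hi' : i < v := Finset.mem_range.mp hi
      have hv' : v - (i + 1) = v - 1 - i := by omega
      have hexp : (v - 1 - i) * b2 + b2 = (v - i) * b2 := by
        rw [← Nat.succ_mul]
        congr 1
        omega
      rw [hv', ← hexp]
      ring
    · simp only [Nat.sub_zero, pow_zero, mul_one, zero_mul]
      have : v * b2 + b2 = (v + 1) * b2 := by ring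
      rw [← this, pow_add]
      ring
  have id1 : MvPolynomial.C (c2 ^ v) * (MvPolynomial.X 0 : MvPolynomial (Fin 2) k) ^ ((v + 1) * b1) =
        MvPolynomial.X 0 ^ b1 * pPoly k b1 b2 v c1 c2 -
          MvPolynomial.C c1 * MvPolynomial.X 0 ^ (v * b1 - a1 - 1) *
            MvPolynomial.X 1 ^ (v * b2 - a2 - 1) * qPoly k a1 a2 b1 b2 v c1 c2 := by
    rw [sump1, sumq1]; ring
  have id2 : MvPolynomial.C (c1 ^ v) * (MvPolynomial.X 1 : MvPolynomial (Fin 2) k) ^ ((v + 1) * b2) =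
        MvPolynomial.X 1 ^ b2 * pPoly k b1 b2 v c1 c2 -
          MvPolynomial.C c2 * MvPolynomial.X 0 ^ (v * b1 - a1 - 1) *
            MvPolynomial.X 1 ^ (v * b2 - a2 - 1) * qPoly k a1 a2 b1 b2 v c1 c2 := by
    rw [sump2, sumq2]; ring
  -- ideal-theoretic part
  set I := Ideal.span {pPoly k b1 b2 v c1 c2, qPoly k a1 a2 b1 b2 v c1 c2} with hI
  set m := Ideal.span {(MvPolynomial.X 0 : MvPolynomial (Fin 2) k), MvPolynomial.X 1} with hm
  have hpI : pPoly k b1 b2 v c1 c2 ∈ I := Ideal.subset_span (by simp)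
  have hqI : qPoly k a1 a2 b1 b2 v c1 c2 ∈ I := Ideal.subset_span (by simp)
  have hX0m : (MvPolynomial.X 0 : MvPolynomial (Fin 2) k) ∈ m := Ideal.subset_span (by simp)
  have hX1m : (MvPolynomial.X 1 : MvPolynomial (Fin 2) k) ∈ m := Ideal.subset_span (by simp)
  -- I ≤ m
  have hdiv : ∀ g : MvPolynomial (Fin 2) k,
      ((MvPolynomial.X 0 : MvPolynomial (Fin 2) k) ∣ g ∨ (MvPolynomial.X 1 : MvPolynomial (Fin 2) k) ∣ g) → g ∈ m := by
    rintro g (⟨t, rfl⟩ | ⟨t, rfl⟩)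
    · exact Ideal.mul_mem_right _ _ hX0m
    · exact Ideal.mul_mem_right _ _ hX1m
  have hpm : pPoly k b1 b2 v c1 c2 ∈ m := by
    rw [pPoly]
    refine Ideal.sum_mem _ fun i hi => ?_
    rcases Nat.eq_zero_or_pos i with h | h
    · subst h
      have hne : (v - 0) * b2 ≠ 0 := Nat.mul_ne_zero (by omega) (by omega)
      exact hdiv _ (Or.inr ((dvd_pow_self _ hne).mul_left _))
    · have hne : i * b1 ≠ 0 := Nat.mul_ne_zero (by omega) (by omega)
      exact hdiv _ (Or.inl (((dvd_pow_self _ hne).mul_left _).mul_right _))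
  have hqm : qPoly k a1 a2 b1 b2 v c1 c2 ∈ m := by
    rw [qPoly]
    refine Ideal.sum_mem _ fun i hi => ?_
    have hi' : i < v := Finset.mem_range.mp hi
    have hW : (v - 1 - i) * b1 ≤ a1 := le_trans (Nat.mul_le_mul_right _ (by omega)) h1
    have hne : a1 + 1 - (v - 1 - i) * b1 ≠ 0 := by omega
    exact hdiv _ (Or.inl (((dvd_pow_self _ hne).mul_left _).mul_right _))
  have hIm : I ≤ m := by
    rw [hI, Ideal.span_le]
    intro x hx
    simp only [Set.mem_insert_iff, Set.mem_singleton_iff] at hx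
    rcases hx with rfl | rfl
    · exact hpm
    · exact hqm
  -- X0, X1 powers in I
  have hX0I : (MvPolynomial.X 0 : MvPolynomial (Fin 2) k) ^ ((v + 1) * b1) ∈ I := by
    have h : MvPolynomial.C (c2 ^ v) * (MvPolynomial.X 0 : MvPolynomial (Fin 2) k) ^ ((v + 1) * b1) ∈ I := by
      rw [id1]
      exact Ideal.sub_mem _ (Ideal.mul_mem_left _ _ hpI) (Ideal.mul_mem_left _ _ hqI)
    have := Ideal.mul_mem_left I (MvPolynomial.C ((c2 ^ v)⁻¹)) h
    rwa [← mul_assoc, ← map_mul, inv_mul_cancel₀ (pow_ne_zero _ hc2), map_one, one_mul] at this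
  have hX1I : (MvPolynomial.X 1 : MvPolynomial (Fin 2) k) ^ ((v + 1) * b2) ∈ I := by
    have h : MvPolynomial.C (c1 ^ v) * (MvPolynomial.X 1 : MvPolynomial (Fin 2) k) ^ ((v + 1) * b2) ∈ I := by
      rw [id2]
      exact Ideal.sub_mem _ (Ideal.mul_mem_left _ _ hpI) (Ideal.mul_mem_left _ _ hqI)
    have := Ideal.mul_mem_left I (MvPolynomial.C ((c1 ^ v)⁻¹)) h
    rwa [← mul_assoc, ← map_mul, inv_mul_cancel₀ (pow_ne_zero _ hc1), map_one, one_mul] at this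
  -- m as span of image, and maximality
  have hmeq : m = Ideal.span (MvPolynomial.X '' (Set.univ : Set (Fin 2)) : Set (MvPolynomial (Fin 2) k)) := by
    rw [hm, Set.image_univ]
    congr 1
    ext f
    constructor
    · rintro (rfl | rfl) <;> [exact ⟨0, rfl⟩; exact ⟨1, rfl⟩]
    · rintro ⟨i, rfl⟩
      fin_cases i
      · left; rfl
      · right; rfl
  have hmker : m = RingHom.ker (MvPolynomial.constantCoeff : MvPolynomial (Fin 2) k →+* k) := by
    ext f
    rw [hmeq, MvPolynomial.mem_ideal_span_X_image, RingHom.mem_ker]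
    constructor
    · intro h
      rw [MvPolynomial.constantCoeff_eq]
      by_contra hne
      obtain ⟨i, _, hi⟩ := h 0 (MvPolynomial.mem_support_iff.mpr hne)
      simp at hi
    · intro h mm hmm
      have hne : mm ≠ 0 := by
        rintro rfl
        rw [MvPolynomial.mem_support_iff, ← MvPolynomial.constantCoeff_eq] at hmm
        exact hmm h
      obtain ⟨i, hi⟩ := Finsupp.ne_iff.mp hne
      exact ⟨i, Set.mem_univ i, by simpa using hi⟩
  have hmmax : m.IsMaximal := by
    rw [hmker]
    exact RingHom.ker_isMaximal_of_surjective _ fun a => ⟨MvPolynomial.C a, MvPolynomial.constantCoeff_C _ a⟩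
  have hrad : I.radical = m := by
    apply le_antisymm
    · calc I.radical ≤ m.radical := Ideal.radical_mono hIm
        _ = m := hmmax.isPrime.radical
    · rw [hm, Ideal.span_le]
      intro x hx
      simp only [Set.mem_insert_iff, Set.mem_singleton_iff] at hx
      rcases hx with rfl | rfl
      · exact ⟨(v + 1) * b1, hX0I⟩
      · exact ⟨(v + 1) * b2, hX1I⟩
  refine ⟨id1, id2, ?_, hrad⟩
  exact Ideal.isPrimary_of_isMaximal_radical (hrad ▸ hmmax)
end

section
/- Let F = X_1^{a_1}···X_{m+n}^{a_{m+n}}(X_1^{b_1}···X_m^{b_m} − c X_{m+1}^{b_{m+1}}···X_{m+n}^{b_{m+n}}) = F_1 − cF_2 with c ≠ 0, where F_1, F_2 are the two monomials. Let f ∈ Ann_R(F) and let g = d x_1^{s_1}···x_{m+n}^{s_{m+n}} (d ≠ 0) be a term appearing in f. If g ∘ F_2 ≠ 0, then s_i ≥ b_i for all i = m+1,...,m+n, and the term c·d·x_1^{s_1+b_1}···x_m^{s_m+b_m} x_{m+1}^{s_{m+1}−b_{m+1}}···x_{m+n}^{s_{m+n}−b_{m+n}} appears in f. -/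
open scoped Classical
open MvPolynomial Finset

lemma prod_X_pow_univ {k : Type*} [CommRing k] {σ : Type*} [Fintype σ] (nn : σ → ℕ) :
    (∏ i, (MvPolynomial.X i : MvPolynomial σ k) ^ nn i) =
      MvPolynomial.monomial (Finsupp.equivFunOnFinite.symm nn) 1 := by
  set N := (Finsupp.equivFunOnFinite.symm nn : σ →₀ ℕ) with hN
  have hco : ∀ i, N i = nn i := fun i => rfl
  rw [← MvPolynomial.prod_X_pow_eq_monomial (s := N)]
  rw [Finset.prod_subset (Finset.subset_univ N.support)]
  · exact Finset.prod_congr rfl fun i _ => by rw [hco]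
  · intro i _ hi
    have : N i = 0 := by simpa using Finsupp.notMem_support_iff.mp hi
    rw [this, pow_zero]

lemma coeff_contract_s14 {k : Type*} [CommRing k] {σ : Type*}
    (f F : MvPolynomial σ k) (e : σ →₀ ℕ) :
    MvPolynomial.coeff e (contract f F) =
      ∑ v ∈ F.support, if e ≤ v then
        MvPolynomial.coeff (v - e) f * MvPolynomial.coeff v F else 0 := by
  unfold contract
  simp only [MvPolynomial.coeff_sum]
  rw [Finset.sum_comm]
  refine Finset.sum_congr rfl fun v hv => ?_
  simp only [apply_ite (MvPolynomial.coeff e), MvPolynomial.coeff_monomial,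
    MvPolynomial.coeff_zero]
  by_cases hev : e ≤ v
  · rw [if_pos hev]
    have key : ∀ u : σ →₀ ℕ, ((if u ≤ v then (if v - u = e then
        MvPolynomial.coeff u f * MvPolynomial.coeff v F else 0) else 0) : k) =
        if u = v - e then MvPolynomial.coeff u f * MvPolynomial.coeff v F else 0 := by
      intro u
      by_cases h1 : u ≤ v
      · by_cases h2 : v - u = e
        · rw [if_pos h1, if_pos h2, if_pos]
          ext i
          have h1i := Finsupp.le_def.mp h1 i
          have h2i : v i - u i = e i := by rw [← Finsupp.tsub_apply, h2]
          rw [Finsupp.tsub_apply]; omega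
        · rw [if_pos h1, if_neg h2, if_neg]
          intro h3
          apply h2
          ext i
          have h1i := Finsupp.le_def.mp h1 i
          have hevi := Finsupp.le_def.mp hev i
          have h3i : u i = v i - e i := by rw [← Finsupp.tsub_apply, ← h3]
          rw [Finsupp.tsub_apply]; omega
      · rw [if_neg h1, if_neg]
        intro h3
        apply h1
        rw [h3]
        intro i; rw [Finsupp.tsub_apply]; omega
    rw [Finset.sum_congr rfl fun u _ => key u, Finset.sum_ite_eq' f.support (v - e)]
    by_cases hm : v - e ∈ f.support
    · rw [if_pos hm]
    · rw [if_neg hm, MvPolynomial.notMem_support_iff.mp hm, zero_mul]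
  · rw [if_neg hev]
    refine Finset.sum_eq_zero fun u _ => ?_
    by_cases h1 : u ≤ v
    · rw [if_pos h1, if_neg]
      intro h2
      apply hev
      rw [← h2]
      intro i; rw [Finsupp.tsub_apply]; omega
    · rw [if_neg h1]

/-- Lemma 2.3(2): if the term `g = d x^s` of `f ∈ Ann_R(F)` satisfies `g ∘ F_2 ≠ 0`, then
`s_i ≥ b_i` for `i = m+1,...,m+n`, and the term
`c d x_1^{s_1+b_1}⋯x_m^{s_m+b_m} x_{m+1}^{s_{m+1}-b_{m+1}}⋯x_{m+n}^{s_{m+n}-b_{m+n}}`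
appears in `f`. Here `F = F_1 - c F_2` with
`F_1 = X_1^{a_1+b_1}⋯X_m^{a_m+b_m}X_{m+1}^{a_{m+1}}⋯X_{m+n}^{a_{m+n}}` and
`F_2 = X_1^{a_1}⋯X_m^{a_m}X_{m+1}^{a_{m+1}+b_{m+1}}⋯X_{m+n}^{a_{m+n}+b_{m+n}}`. -/
theorem stmt14 (k : Type*) [Field k] (m n : ℕ)
    (a b : Fin (m + n) → ℕ) (c : k) (hc : c ≠ 0)
    (f : MvPolynomial (Fin (m + n)) k)
    (hf : f ∈ annSet
      ((∏ i, (MvPolynomial.X i : MvPolynomial (Fin (m + n)) k) ^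
          (a i + if (i : ℕ) < m then b i else 0)) -
        MvPolynomial.C c *
          ∏ i, (MvPolynomial.X i : MvPolynomial (Fin (m + n)) k) ^
            (a i + if m ≤ (i : ℕ) then b i else 0)))
    (s : Fin (m + n) → ℕ) (d : k) (hd : d ≠ 0)
    (hterm : MvPolynomial.coeff (Finsupp.equivFunOnFinite.symm s) f = d)
    (hg : contract (MvPolynomial.monomial (Finsupp.equivFunOnFinite.symm s) d)
        (∏ i, (MvPolynomial.X i : MvPolynomial (Fin (m + n)) k) ^
          (a i + if m ≤ (i : ℕ) then b i else 0)) ≠ 0) :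
    (∀ i : Fin (m + n), m ≤ (i : ℕ) → b i ≤ s i) ∧
    MvPolynomial.coeff (Finsupp.equivFunOnFinite.symm
        (fun i : Fin (m + n) => if (i : ℕ) < m then s i + b i else s i - b i)) f = c * d := by
  set A1 : Fin (m + n) →₀ ℕ :=
    Finsupp.equivFunOnFinite.symm (fun i => a i + if (i : ℕ) < m then b i else 0) with hA1def
  set A2 : Fin (m + n) →₀ ℕ :=
    Finsupp.equivFunOnFinite.symm (fun i => a i + if m ≤ (i : ℕ) then b i else 0) with hA2def
  set s' : Fin (m + n) →₀ ℕ := Finsupp.equivFunOnFinite.symm s with hs'def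
  have hA1i : ∀ i, A1 i = a i + if (i : ℕ) < m then b i else 0 := fun i => rfl
  have hA2i : ∀ i, A2 i = a i + if m ≤ (i : ℕ) then b i else 0 := fun i => rfl
  rw [prod_X_pow_univ] at hg
  -- Step 1: s' ≤ A2
  have hsA2 : s' ≤ A2 := by
    by_contra hle
    apply hg
    unfold contract
    rw [MvPolynomial.support_monomial, if_neg hd,
      MvPolynomial.support_monomial, if_neg (one_ne_zero (α := k)),
      Finset.sum_singleton, Finset.sum_singleton, if_neg hle]
  have hsA2i : ∀ i, s i ≤ a i + if m ≤ (i : ℕ) then b i else 0 :=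
    fun i => Finsupp.le_def.mp hsA2 i
  -- the annihilator hypothesis in monomial form
  have hf' : contract f ((MvPolynomial.monomial A1 1 : MvPolynomial (Fin (m + n)) k)
      - MvPolynomial.monomial A2 c) = 0 := by
    have := hf
    simp only [annSet, Set.mem_setOf_eq, prod_X_pow_univ] at this
    rw [MvPolynomial.C_mul_monomial, mul_one] at this
    exact this
  set F : MvPolynomial (Fin (m + n)) k :=
    (MvPolynomial.monomial A1 1 : MvPolynomial (Fin (m + n)) k) - MvPolynomial.monomial A2 c
    with hFdef
  have hcoeffF : ∀ v, MvPolynomial.coeff v F =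
      (if A1 = v then (1:k) else 0) - (if A2 = v then c else 0) := by
    intro v
    rw [hFdef, MvPolynomial.coeff_sub, MvPolynomial.coeff_monomial, MvPolynomial.coeff_monomial]
  set e : Fin (m + n) →₀ ℕ := A2 - s' with hedef
  have hei : ∀ i, e i = A2 i - s i := fun i => Finsupp.tsub_apply A2 s' i
  have heA2 : e ≤ A2 := Finsupp.le_def.mpr fun i => by rw [hei]; omega
  have hA2e : A2 - e = s' := by
    ext i
    have h3 := hei i
    have h4 : s i ≤ A2 i := Finsupp.le_def.mp hsA2 i
    rw [Finsupp.tsub_apply]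
    show A2 i - e i = s i
    omega
  -- key equation
  have h0 : (∑ v ∈ F.support, if e ≤ v then
      MvPolynomial.coeff (v - e) f * MvPolynomial.coeff v F else 0) = 0 := by
    rw [← coeff_contract_s14, hf']
    simp
  have hsub : (∑ v ∈ F.support, if e ≤ v then
      MvPolynomial.coeff (v - e) f * MvPolynomial.coeff v F else 0) =
      ∑ v ∈ insert A1 {A2}, if e ≤ v then
      MvPolynomial.coeff (v - e) f * MvPolynomial.coeff v F else 0 := by
    refine Finset.sum_subset ?_ ?_
    · intro v hv
      simp only [Finset.mem_insert, Finset.mem_singleton]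
      by_contra hcon
      push_neg at hcon
      exact (MvPolynomial.mem_support_iff.mp hv) (by
        rw [hcoeffF, if_neg (fun h => hcon.1 h.symm), if_neg (fun h => hcon.2 h.symm), sub_zero])
    · intro v _ hv
      simp [MvPolynomial.notMem_support_iff.mp hv]
  have hkey : (0:k) = ∑ v ∈ insert A1 {A2}, if e ≤ v then
      MvPolynomial.coeff (v - e) f * MvPolynomial.coeff v F else 0 := by
    rw [← hsub]
    exact h0.symm
  by_cases hA : A1 = A2
  · -- degenerate case: b = 0 and c = 1
    have hb0 : ∀ i, b i = 0 := by
      intro i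
      have : A1 i = A2 i := by rw [hA]
      rw [hA1i, hA2i] at this
      by_cases him : (i : ℕ) < m
      · rw [if_pos him, if_neg (by omega)] at this; omega
      · rw [if_neg him, if_pos (by omega)] at this; omega
    have hts : (Finsupp.equivFunOnFinite.symm
        (fun i : Fin (m + n) => if (i : ℕ) < m then s i + b i else s i - b i)) = s' := by
      ext i
      show (if (i : ℕ) < m then s i + b i else s i - b i) = s i
      rw [hb0]; simp
    have hcF : MvPolynomial.coeff A2 F = 1 - c := by
      rw [hcoeffF, hA]; simp
    rw [hA, Finset.insert_eq_self.mpr (Finset.mem_singleton_self A2),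
      Finset.sum_singleton, if_pos heA2, hA2e, hterm, hcF] at hkey
    have hc1 : c = 1 := by
      rcases mul_eq_zero.mp hkey.symm with h | h
      · exact absurd h hd
      · have := sub_eq_zero.mp h
        exact this.symm
    refine ⟨fun i _ => by rw [hb0]; omega, ?_⟩
    rw [hts, hterm, hc1, one_mul]
  · -- main case
    have hcF2 : MvPolynomial.coeff A2 F = -c := by
      rw [hcoeffF, if_neg hA]; simp
    have hcF1 : MvPolynomial.coeff A1 F = 1 := by
      rw [hcoeffF, if_neg (show ¬ A2 = A1 from fun h => hA h.symm)]; simp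
    rw [Finset.sum_insert (by simpa using hA), Finset.sum_singleton,
      if_pos heA2, hA2e, hterm, hcF2, hcF1] at hkey
    simp only [mul_one, mul_neg] at hkey
    have heA1 : e ≤ A1 := by
      by_contra hle
      rw [if_neg hle, zero_add, eq_comm, neg_eq_zero] at hkey
      exact (mul_ne_zero hd hc) hkey
    rw [if_pos heA1] at hkey
    have hA1term : MvPolynomial.coeff (A1 - e) f = c * d := by
      rw [mul_comm]
      linear_combination -hkey
    have hbs : ∀ i : Fin (m + n), m ≤ (i : ℕ) → b i ≤ s i := by
      intro i him
      have h1 : e i ≤ A1 i := Finsupp.le_def.mp heA1 i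
      have h3 := hei i
      have h2 := hsA2i i
      rw [hA1i, if_neg (by omega : ¬ (i : ℕ) < m)] at h1
      rw [hA2i, if_pos him] at h3
      rw [if_pos him] at h2
      omega
    have hA1e : A1 - e = (Finsupp.equivFunOnFinite.symm
        (fun i : Fin (m + n) => if (i : ℕ) < m then s i + b i else s i - b i)) := by
      ext i
      rw [Finsupp.tsub_apply]
      show A1 i - e i = (if (i : ℕ) < m then s i + b i else s i - b i)
      have h3 := hei i
      have h2 := hsA2i i
      rw [hA1i]
      rw [hA2i] at h3
      by_cases him : (i : ℕ) < m
      · rw [if_pos him, if_pos him]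
        rw [if_neg (by omega : ¬ m ≤ (i : ℕ))] at h3 h2
        omega
      · have hb := hbs i (by omega)
        rw [if_neg him, if_neg him]
        rw [if_pos (by omega : m ≤ (i : ℕ))] at h3 h2
        omega
    refine ⟨hbs, ?_⟩
    rw [hA1e] at hA1term
    exact hA1term
end

section
/- With notation as in the previous statement: suppose b_j > 0 for some j with m+1 ≤ j ≤ m+n, and the term g = d x_1^{s_1}···x_{m+n}^{s_{m+n}} appears in f ∈ Ann_R(F) with s_j maximal among the x_j-exponents of all terms of f. Then g ∘ F_1 = 0. -/
open scoped Classical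
open MvPolynomial Finset

lemma prod_X_pow_eq {k : Type*} [CommRing k] {N : ℕ} (g : Fin N → ℕ) :
    (∏ i, (MvPolynomial.X i : MvPolynomial (Fin N) k) ^ g i) =
      MvPolynomial.monomial (Finsupp.equivFunOnFinite.symm g) 1 := by
  rw [MvPolynomial.monomial_eq, Finsupp.prod_fintype]
  · simp
  · intro i; simp

/-- Lemma 2.3(3): if `b_j > 0` for some `j` with `m+1 ≤ j ≤ m+n` and the term
`g = d x^s` of `f ∈ Ann_R(F)` has `s_j` maximal among the `x_j`-exponents of the
terms of `f`, then `g ∘ F_1 = 0`. -/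
theorem stmt15 (k : Type*) [Field k] (m n : ℕ)
    (a b : Fin (m + n) → ℕ) (c : k) (hc : c ≠ 0)
    (f : MvPolynomial (Fin (m + n)) k)
    (hf : f ∈ annSet
      ((∏ i, (MvPolynomial.X i : MvPolynomial (Fin (m + n)) k) ^
          (a i + if (i : ℕ) < m then b i else 0)) -
        MvPolynomial.C c *
          ∏ i, (MvPolynomial.X i : MvPolynomial (Fin (m + n)) k) ^
            (a i + if m ≤ (i : ℕ) then b i else 0)))
    (j : Fin (m + n)) (hj : m ≤ (j : ℕ)) (hbj : 0 < b j)
    (s : Fin (m + n) → ℕ) (d : k) (hd : d ≠ 0)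
    (hterm : MvPolynomial.coeff (Finsupp.equivFunOnFinite.symm s) f = d)
    (hmax : ∀ t ∈ f.support, t j ≤ s j) :
    contract (MvPolynomial.monomial (Finsupp.equivFunOnFinite.symm s) d)
      (∏ i, (MvPolynomial.X i : MvPolynomial (Fin (m + n)) k) ^
        (a i + if (i : ℕ) < m then b i else 0)) = 0 := by
  classical
  set e1 : Fin (m + n) →₀ ℕ :=
    Finsupp.equivFunOnFinite.symm (fun i => a i + if (i : ℕ) < m then b i else 0) with he1
  set e2 : Fin (m + n) →₀ ℕ :=
    Finsupp.equivFunOnFinite.symm (fun i => a i + if m ≤ (i : ℕ) then b i else 0) with he2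
  set sh : Fin (m + n) →₀ ℕ := Finsupp.equivFunOnFinite.symm s with hsh
  have he1a : ∀ i, e1 i = a i + if (i : ℕ) < m then b i else 0 := fun i => rfl
  have he2a : ∀ i, e2 i = a i + if m ≤ (i : ℕ) then b i else 0 := fun i => rfl
  have hsha : ∀ i, sh i = s i := fun i => rfl
  have he1j : e1 j = a j := by rw [he1a]; simp [Nat.not_lt.mpr hj]
  have he2j : e2 j = a j + b j := by rw [he2a]; simp [hj]
  rw [prod_X_pow_eq, ← he1]
  -- suffices: ¬ sh ≤ e1
  have key : ¬ sh ≤ e1 := by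
    intro hle
    -- f ∘ F = 0
    rw [annSet, prod_X_pow_eq, prod_X_pow_eq, ← he1, ← he2, Set.mem_setOf_eq] at hf
    have h12 : e1 ≠ e2 := by
      intro h
      have := congrArg (fun v => v j) h
      simp only [he1j, he2j] at this
      omega
    set F : MvPolynomial (Fin (m + n)) k :=
      MvPolynomial.monomial e1 1 - MvPolynomial.C c * MvPolynomial.monomial e2 1 with hF
    have hFe : F = MvPolynomial.monomial e1 1 - MvPolynomial.monomial e2 c := by
      rw [hF, MvPolynomial.C_mul_monomial, mul_one]
    have hcoeff1 : MvPolynomial.coeff e1 F = 1 := by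
      rw [hFe]
      simp [MvPolynomial.coeff_monomial, h12, Ne.symm h12]
    have hcoeff2 : MvPolynomial.coeff e2 F = -c := by
      rw [hFe]
      simp [MvPolynomial.coeff_monomial, h12]
    have hFsupp : F.support ⊆ {e1, e2} := by
      rw [hFe]
      refine (MvPolynomial.support_sub _ _ _).trans ?_
      apply Finset.union_subset
      · exact (MvPolynomial.support_monomial_subset).trans (by simp)
      · exact (MvPolynomial.support_monomial_subset).trans (by simp)
    -- rewrite contract f F as sum over {e1, e2}
    have hcontract : contract f F =
        ∑ t ∈ f.support, ∑ w ∈ ({e1, e2} : Finset (Fin (m+n) →₀ ℕ)),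
          if t ≤ w then MvPolynomial.monomial (w - t)
            (MvPolynomial.coeff t f * MvPolynomial.coeff w F) else 0 := by
      rw [contract]
      refine Finset.sum_congr rfl fun t _ => ?_
      refine Finset.sum_subset hFsupp fun w _ hw => ?_
      rw [MvPolynomial.notMem_support_iff.mp hw]
      simp
    set u : Fin (m + n) →₀ ℕ := e1 - sh with hu
    have huj : u j = a j - s j := by
      rw [hu, Finsupp.tsub_apply, he1j, hsha]
    have hfzero : MvPolynomial.coeff u (contract f F) = 0 := by rw [hf]; simp
    rw [hcontract] at hfzero
    simp only [Finset.sum_pair h12, MvPolynomial.coeff_sum, MvPolynomial.coeff_add] at hfzero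
    rw [Finset.sum_add_distrib] at hfzero
    have hS1 : (∑ t ∈ f.support, MvPolynomial.coeff u
        (if t ≤ e1 then MvPolynomial.monomial (e1 - t)
          (MvPolynomial.coeff t f * MvPolynomial.coeff e1 F) else 0)) = d := by
      have hmem : sh ∈ f.support := by
        rw [MvPolynomial.mem_support_iff, hterm]; exact hd
      rw [Finset.sum_eq_single_of_mem sh hmem]
      · rw [if_pos hle, MvPolynomial.coeff_monomial, if_pos rfl, hcoeff1, mul_one, hterm]
      · intro t _ hne
        split_ifs with h1
        · rw [MvPolynomial.coeff_monomial]
          rw [if_neg]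
          intro heq
          apply hne
          ext i
          have h1i : t i ≤ e1 i := h1 i
          have hlei : sh i ≤ e1 i := hle i
          have heqi : e1 i - t i = u i := by
            rw [← heq]; rw [Finsupp.tsub_apply]
          have hui : u i = e1 i - sh i := by rw [hu, Finsupp.tsub_apply]
          omega
        · simp
    rw [hS1] at hfzero
    -- so the second sum is -d ≠ 0, hence some term is nonzero
    have hS2 : (∑ t ∈ f.support, MvPolynomial.coeff u
        (if t ≤ e2 then MvPolynomial.monomial (e2 - t)
          (MvPolynomial.coeff t f * MvPolynomial.coeff e2 F) else 0)) ≠ 0 := by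
      intro h0
      rw [h0, add_zero] at hfzero
      exact hd hfzero
    obtain ⟨t, ht, htne⟩ := Finset.exists_ne_zero_of_sum_ne_zero hS2
    have h2 : t ≤ e2 := by
      by_contra h
      rw [if_neg h] at htne
      simp at htne
    rw [if_pos h2, MvPolynomial.coeff_monomial] at htne
    have heq : e2 - t = u := by
      by_contra h
      rw [if_neg h] at htne
      exact htne rfl
    have htj : t j ≤ s j := hmax t ht
    have h2j : t j ≤ e2 j := h2 j
    have heqj : e2 j - t j = u j := by rw [← heq, Finsupp.tsub_apply]
    have hslej : s j ≤ a j := by have := hle j; rw [hsha, he1j] at this; exact this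
    rw [he2j] at h2j
    rw [he2j, huj] at heqj
    omega
  -- conclude
  rw [contract, MvPolynomial.support_monomial, if_neg hd,
    MvPolynomial.support_monomial, if_neg one_ne_zero]
  simp [← hsh, key]
end
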